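/- Let M be a simple matroid with Cremona basis b, and let F be a nonempty flat with F ∩ b = ∅ and connected support graph G_b(F). Then the rank of F equals |supp_b(F)| − 1. -/

import Mathlib

open Set

variable {α : Type*}

/-- The set of non-basis elements on the line through `x` and `y`. -/
def Fij (M : Matroid α) (x y : α) : Set α := M.closure {x, y} \ {x, y}

/-- `b` is a Cremona basis: a base of `M` such that the sets
`Fij = cl{bᵢ,bⱼ} \ {bᵢ,bⱼ}` are pairwise disjoint with union `M.E \ b`. -/
def IsCremonaBasis (M : Matroid α) (b : Set α) : Prop :=
  M.IsBase b ∧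
  (∀ x ∈ b, ∀ y ∈ b, ∀ x' ∈ b, ∀ y' ∈ b, x ≠ y → x' ≠ y' →
    ({x, y} : Set α) ≠ {x', y'} → Disjoint (Fij M x y) (Fij M x' y')) ∧
  (⋃ x ∈ b, ⋃ y ∈ b, ⋃ _ : x ≠ y, Fij M x y) = M.E \ b

/-- The `b`-support of a set `S`. -/
def suppb (M : Matroid α) (b S : Set α) : Set α :=
  (b ∩ S) ∪ ⋃ x ∈ b, ⋃ y ∈ b, ⋃ _ : x ≠ y, ⋃ _ : (S ∩ Fij M x y).Nonempty, ({x, y} : Set α)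

/-- Adjacency in the support graph `G_b(S)`: there is an edge between `x` and `y`
for each element of `S ∩ Fij M x y`. -/
def Adjb (M : Matroid α) (b S : Set α) (x y : α) : Prop :=
  x ∈ b ∧ y ∈ b ∧ x ≠ y ∧ (S ∩ Fij M x y).Nonempty

/-- The support graph `G_b(S)` is connected. -/
def SuppConnected (M : Matroid α) (b S : Set α) : Prop :=
  ∀ x ∈ suppb M b S, ∀ y ∈ suppb M b S, Relation.ReflTransGen (Adjb M b S) x y

/-- The vertex set of the connected component of `x` in the support graph `G_b(S)`. -/
def compOf (M : Matroid α) (b S : Set α) (x : α) : Set α :=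
  {y ∈ suppb M b S | Relation.ReflTransGen (Adjb M b S) x y}

/-- A matroid is simple if every pair of (not necessarily distinct) elements
of the ground set is independent. -/
def MSimple (M : Matroid α) : Prop := ∀ e ∈ M.E, ∀ f ∈ M.E, M.Indep {e, f}

/-- A circuit: a minimal dependent set. -/
def MCircuit (M : Matroid α) (C : Set α) : Prop :=
  C ⊆ M.E ∧ ¬ M.Indep C ∧ ∀ x ∈ C, M.Indep (C \ {x})

/-- A matroid is connected if its ground set is nonempty and every two distinct
elements lie on a common circuit. -/
def MConnected (M : Matroid α) : Prop :=
  M.E.Nonempty ∧ ∀ e ∈ M.E, ∀ f ∈ M.E, e = f ∨ ∃ C, MCircuit M C ∧ e ∈ C ∧ f ∈ C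

/-- The rank of a set in a matroid: the supremum of cardinalities of independent subsets. -/
noncomputable def mRank (M : Matroid α) (X : Set α) : ℕ :=
  sSup {n | ∃ I, M.Indep I ∧ I ⊆ X ∧ I.ncard = n}

/-! Pick a vertex `x₀` of the support `S` of `F`. As `F` misses the basis, `x₀ ∉ F = cl F`, so
`r(F ∪ x₀) = r(F) + 1`. Every point of `F` lies on the line through two vertices of `S`, so
`F ∪ x₀ ⊆ cl S`. Conversely, if `u ∈ cl(F ∪ x₀)` and `f ∈ F` lies on the line through `u` and `v`,
then simplicity and the exchange property give `v ∈ cl{u, f}`; since `G_b(F)` is connected this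
yields `S ⊆ cl(F ∪ x₀)`. Hence `r(F) + 1 = r(S) = |S|`, the support being independent. -/

lemma Relation.ReflTransGen.mem_of_mem {r : α → α → Prop} {R : Set α} {a c : α}
    (hR : ∀ ⦃u v⦄, r u v → u ∈ R → v ∈ R) (h : Relation.ReflTransGen r a c) (ha : a ∈ R) :
    c ∈ R := by
  induction h with
  | refl => exact ha
  | tail _ hbc ih => exact hR hbc ih

lemma mRank_eq_toNat_eRk {M : Matroid α} {X : Set α} (hX : M.IsRkFinite X) :
    mRank M X = (M.eRk X).toNat := by
  obtain ⟨I, hI⟩ := M.exists_isBasis' X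
  refine IsGreatest.csSup_eq ⟨⟨I, hI.indep, hI.subset, by rw [hI.eRk_eq_encard, ncard_def]⟩, ?_⟩
  rintro _ ⟨J, hJ, hJX, rfl⟩
  exact ENat.toNat_le_toNat (hJ.encard_le_eRk_of_subset hJX) hX.eRk_lt_top.ne

lemma suppb_subset (M : Matroid α) (b S : Set α) : suppb M b S ⊆ b := by
  rintro z (hz | hz)
  · exact hz.1
  · simp only [mem_iUnion] at hz
    obtain ⟨x, hx, y, hy, -, -, rfl | rfl⟩ := hz
    exacts [hx, hy]

lemma Adjb.mem_suppb {M : Matroid α} {b S : Set α} {x y : α} (h : Adjb M b S x y) :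
    x ∈ suppb M b S ∧ y ∈ suppb M b S := by
  obtain ⟨hx, hy, hxy, hS⟩ := h
  constructor <;>
  · refine Or.inr ?_
    simp only [mem_iUnion]
    exact ⟨x, hx, y, hy, hxy, hS, by simp⟩

lemma IsCremonaBasis.exists_mem_Fij {M : Matroid α} {b : Set α} (hb : IsCremonaBasis M b)
    {f : α} (hf : f ∈ M.E \ b) : ∃ x ∈ b, ∃ y ∈ b, x ≠ y ∧ f ∈ Fij M x y := by
  rw [← hb.2.2] at hf
  simpa only [mem_iUnion, exists_prop] using hf

lemma IsCremonaBasis.subset_closure_suppb {M : Matroid α} {b S : Set α}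
    (hb : IsCremonaBasis M b) (hS : S ⊆ M.E) : S ⊆ M.closure (suppb M b S) := by
  have hsupp : suppb M b S ⊆ M.E := (suppb_subset M b S).trans hb.1.subset_ground
  intro f hf
  by_cases hfb : f ∈ b
  · exact M.subset_closure _ hsupp (Or.inl ⟨hfb, hf⟩)
  obtain ⟨x, hx, y, hy, hxy, hfxy⟩ := hb.exists_mem_Fij ⟨hS hf, hfb⟩
  obtain ⟨hxS, hyS⟩ := Adjb.mem_suppb ⟨hx, hy, hxy, f, hf, hfxy⟩
  exact M.closure_subset_closure (pair_subset hxS hyS) hfxy.1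

lemma MSimple.mem_closure_pair_of_mem_Fij {M : Matroid α} (hM : MSimple M) {u v f : α}
    (hu : u ∈ M.E) (hf : f ∈ Fij M u v) : v ∈ M.closure {f, u} := by
  have hfE : f ∈ M.E := M.closure_subset_ground _ hf.1
  have hfu : f ≠ u := fun h => hf.2 (by simp [h])
  have hfu' : f ∉ M.closure {u} := by
    simpa [pair_sdiff_left hfu] using
      (hM f hfE u hu).notMem_closure_sdiff_of_mem (mem_insert f {u})
  have hfuv : f ∈ M.closure (insert v {u}) \ M.closure {u} :=
    ⟨by rw [pair_comm]; exact hf.1, hfu'⟩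
  exact (Matroid.closure_exchange hfuv).1

lemma suppb_subset_closure_insert {M : Matroid α} {b F : Set α} (hM : MSimple M)
    (hbE : b ⊆ M.E) (hconn : SuppConnected M b F) {x₀ : α} (hx₀ : x₀ ∈ suppb M b F) :
    suppb M b F ⊆ M.closure (insert x₀ F) := by
  intro y hy
  refine (hconn x₀ hx₀ y hy).mem_of_mem ?_ (M.mem_closure_of_mem' (mem_insert x₀ F)
    (hbE (suppb_subset M b F hx₀)))
  rintro u v ⟨hu, -, -, f, hfF, hf⟩ hu'
  have hfE : f ∈ M.E := M.closure_subset_ground _ hf.1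
  have hf' : f ∈ M.closure (insert x₀ F) :=
    M.mem_closure_of_mem' (mem_insert_of_mem x₀ hfF) hfE
  exact M.closure_subset_closure_of_subset_closure (pair_subset hf' hu')
    (hM.mem_closure_pair_of_mem_Fij (hbE hu) hf)

/-- A nonempty non-basis flat with connected support graph has rank
`|supp_b(F)| - 1`. -/
theorem stmt4 (M : Matroid α) (hfin : M.E.Finite) (hsimple : MSimple M)
    (b : Set α) (hb : IsCremonaBasis M b)
    (F : Set α) (hF : M.IsFlat F) (hne : F.Nonempty) (hFb : F ∩ b = ∅)
    (hconn : SuppConnected M b F) :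
    mRank M F = (suppb M b F).ncard - 1 := by
  set S := suppb M b F
  have hbE : b ⊆ M.E := hb.1.subset_ground
  have hSfin : S.Finite := hfin.subset ((suppb_subset M b F).trans hbE)
  have hdisj : Disjoint F b := disjoint_iff_inter_eq_empty.mpr hFb
  obtain ⟨f₀, hf₀⟩ := hne
  obtain ⟨x₀, hx₀, y₀, hy₀, hxy₀, hf₀xy⟩ :=
    hb.exists_mem_Fij ⟨hF.subset_ground hf₀, hdisj.notMem_of_mem_left hf₀⟩
  have hx₀S : x₀ ∈ S := (Adjb.mem_suppb ⟨hx₀, hy₀, hxy₀, f₀, hf₀, hf₀xy⟩).1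
  have hx₀F : x₀ ∉ M.closure F := by
    rw [hF.closure]
    exact hdisj.notMem_of_mem_right hx₀
  have hcl : M.closure (insert x₀ F) = M.closure S := by
    refine subset_antisymm (M.closure_subset_closure_of_subset_closure ?_)
      (M.closure_subset_closure_of_subset_closure
        (suppb_subset_closure_insert hsimple hbE hconn hx₀S))
    exact insert_subset (M.mem_closure_of_mem' hx₀S (hbE hx₀))
      (hb.subset_closure_suppb hF.subset_ground)
  have hFfin : M.IsRkFinite F := M.isRkFinite_of_finite (hfin.subset hF.subset_ground)
  have hrk : M.eRk F + 1 = S.ncard := by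
    rw [← M.eRk_insert_eq_add_one ⟨hbE hx₀, hx₀F⟩, ← M.eRk_closure_eq, hcl, M.eRk_closure_eq,
      (hb.1.indep.subset (suppb_subset M b F)).eRk_eq_encard, hSfin.cast_ncard_eq]
  rw [mRank_eq_toNat_eRk hFfin]
  lift M.eRk F to ℕ using hFfin.eRk_lt_top.ne with r
  norm_cast at hrk
  rw [ENat.toNat_natCast]
  omega
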